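/- Let u ∈ Σ* and L ⊆ Σ* be a finite language. Then perm(u) ⧢ perm(L)^{⧢,*} is regular if and only if for every letter a ∈ Σ occurring in some word of L, we have a⁺ ∩ L ≠ ∅. -/

import Mathlib

/-!
Membership in `perm(u) ⧢ perm(L)^{⧢,*}` depends only on the Parikh vector: the language is the
commutative closure of `u · L*`, i.e. the words `w` with `p(w) ∈ p(u) + S`, where `S` is the
submonoid of `ℕ^Σ` generated by `p(L)`.

If a letter `a` occurs in `L` but no word `aᵏ` (`k ≥ 1`) lies in `L`, every word of `L` containing
`a` contains another letter, so the number of `a`s in a word of the language is at most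
`|u|_a + C · #(other letters)`, with `C` bounding the lengths in `L`; pumping the leading `a`s of a
rearranged word with many `a`s violates this.

Conversely, if `a^{k_a} ∈ L` for every occurring letter `a`, then `S` contains `m • e_a` for
`m = C!`. Reducing the multiplicities of the generators modulo `m` shows that membership in
`p(u) + S` is unchanged when a coordinate above a threshold `N` is replaced by another one above `N`
in the same class modulo `m`, so the left quotients of the language factor through the finitely
many such count classes (Myhill–Nerode).
-/

/-- `IsShuffle u v w` means `w` is an interleaving (shuffle) of `u` and `v`,
i.e. `w = x₁y₁⋯xₙyₙ` with `u = x₁⋯xₙ` and `v = y₁⋯yₙ`. -/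
inductive IsShuffle {α : Type*} : List α → List α → List α → Prop
  | nil : IsShuffle [] [] []
  | left {a : α} {u v w : List α} : IsShuffle u v w → IsShuffle (a :: u) v (a :: w)
  | right {a : α} {u v w : List α} : IsShuffle u v w → IsShuffle u (a :: v) (a :: w)

/-- Shuffle of two languages: `U ⧢ V = ⋃_{x∈U, y∈V} (x ⧢ y)`. -/
def Language.shuffle {α : Type*} (U V : Language α) : Language α :=
  { w | ∃ u ∈ U, ∃ v ∈ V, IsShuffle u v w }

/-- The `n`-fold shuffle of a language with itself (`0`-fold is `{ε}`). -/
def Language.shufflePow {α : Type*} (L : Language α) : ℕ → Language α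
  | 0 => 1
  | n + 1 => (L.shufflePow n).shuffle L

/-- Iterated shuffle (shuffle closure): `L^{⧢,*} = ⋃_{n ≥ 0} L^{⧢,n}`. -/
def Language.shuffleStar {α : Type*} (L : Language α) : Language α :=
  { w | ∃ n, w ∈ L.shufflePow n }

/-- Commutative (permutation) closure: all words with the same letter counts
as some word of `L`. -/
def Language.perm {α : Type*} [DecidableEq α] (L : Language α) : Language α :=
  { u | ∃ w ∈ L, ∀ a : α, u.count a = w.count a }

open List Computability

namespace IsShuffle

variable {α : Type*}

theorem perm_append {u v w : List α} (h : IsShuffle u v w) : w ~ u ++ v := by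
  induction h with
  | nil => rfl
  | left _ ih => exact ih.cons _
  | right _ ih => exact (ih.cons _).trans perm_middle.symm

theorem exists_of_perm_append [DecidableEq α] {w : List α} :
    ∀ {u v : List α}, w ~ u ++ v → ∃ u' v', u' ~ u ∧ v' ~ v ∧ IsShuffle u' v' w := by
  induction w with
  | nil =>
    intro u v h
    obtain ⟨rfl, rfl⟩ := append_eq_nil_iff.mp h.symm.eq_nil
    exact ⟨[], [], .rfl, .rfl, .nil⟩
  | cons c w ih =>
    intro u v h
    have hc : c ∈ u ++ v := h.subset mem_cons_self
    by_cases hu : c ∈ u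
    · have hw : w ~ u.erase c ++ v := by
        simpa [erase_append_left v hu] using h.erase c
      obtain ⟨u', v', hu', hv', hs⟩ := ih hw
      exact ⟨c :: u', v', (hu'.cons c).trans (perm_cons_erase hu).symm, hv', hs.left⟩
    · have hv : c ∈ v := by simpa [hu] using hc
      have hw : w ~ u ++ v.erase c := by
        simpa [erase_append_right v hu] using h.erase c
      obtain ⟨u', v', hu', hv', hs⟩ := ih hw
      exact ⟨u', c :: v', hu', (hv'.cons c).trans (perm_cons_erase hv).symm, hs.right⟩

end IsShuffle

namespace Language

variable {α : Type*} [DecidableEq α]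

theorem mem_perm_iff {L : Language α} {w : List α} : w ∈ L.perm ↔ ∃ x ∈ L, w ~ x := by
  simp only [perm_iff_count]
  rfl

theorem mem_perm_of_perm {L : Language α} {w w' : List α} (h : w ~ w') (hw : w ∈ L.perm) :
    w' ∈ L.perm :=
  let ⟨x, hx, hwx⟩ := mem_perm_iff.mp hw
  mem_perm_iff.mpr ⟨x, hx, h.symm.trans hwx⟩

theorem le_perm (L : Language α) : L ≤ L.perm := fun w hw => mem_perm_iff.mpr ⟨w, hw, .rfl⟩

theorem perm_shuffle_perm (U V : Language α) : U.perm.shuffle V.perm = (U * V).perm := by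
  ext w
  simp only [Language.shuffle, mem_perm_iff, mem_mul]
  constructor
  · rintro ⟨u', ⟨u, hu, hu'⟩, v', ⟨v, hv, hv'⟩, hs⟩
    exact ⟨u ++ v, ⟨u, hu, v, hv, rfl⟩, hs.perm_append.trans (hu'.append hv')⟩
  · rintro ⟨_, ⟨u, hu, v, hv, rfl⟩, hw⟩
    obtain ⟨u', v', hu', hv', hs⟩ := IsShuffle.exists_of_perm_append hw
    exact ⟨u', ⟨u, hu, hu'⟩, v', ⟨v, hv, hv'⟩, hs⟩

theorem perm_one : (1 : Language α).perm = 1 := by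
  ext w
  simp [mem_perm_iff, mem_one]

theorem shufflePow_perm (L : Language α) (n : ℕ) : L.perm.shufflePow n = (L ^ n).perm := by
  induction n with
  | zero => rw [shufflePow, pow_zero, perm_one]
  | succ n ih => rw [shufflePow, ih, perm_shuffle_perm, pow_succ]

theorem shuffleStar_perm (L : Language α) : L.perm.shuffleStar = (L∗).perm := by
  ext w
  change (∃ n, w ∈ L.perm.shufflePow n) ↔ _
  simp only [shufflePow_perm, mem_perm_iff, kstar_eq_iSup_pow, mem_iSup]
  exact ⟨fun ⟨n, x, hx, hw⟩ => ⟨x, ⟨n, hx⟩, hw⟩, fun ⟨x, ⟨n, hx⟩, hw⟩ => ⟨n, x, hx, hw⟩⟩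

end Language

namespace List

variable {α : Type*} [DecidableEq α]

def parikh (w : List α) : α → ℕ := fun a => w.count a

@[simp] theorem parikh_apply (w : List α) (a : α) : w.parikh a = w.count a := rfl

@[simp] theorem parikh_append (x y : List α) : (x ++ y).parikh = x.parikh + y.parikh := by
  ext a
  simp [count_append]

theorem parikh_flatten (S : List (List α)) : S.flatten.parikh = (S.map parikh).sum := by
  induction S with
  | nil => rfl
  | cons x S ih => simp [ih]

theorem parikh_replicate (k : ℕ) (b : α) : (replicate k b).parikh = Pi.single b k := by
  ext a
  by_cases h : a = b
  · subst h
    simp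
  · simp [h, Ne.symm h, count_replicate]

theorem parikh_eq_parikh_iff {x y : List α} : x.parikh = y.parikh ↔ x ~ y := by
  rw [perm_iff_count, funext_iff]
  rfl

end List

namespace Language

variable {α : Type*} [DecidableEq α]

theorem parikh_image_kstar (L : Language α) :
    List.parikh '' (L∗ : Language α) = AddSubmonoid.closure (List.parikh '' L) := by
  ext s
  constructor
  · rintro ⟨x, hx, rfl⟩
    obtain ⟨S, rfl, hS⟩ := mem_kstar.mp hx
    rw [parikh_flatten]
    exact AddSubmonoid.list_sum_mem _ <| by
      simpa using fun y hy => AddSubmonoid.subset_closure (Set.mem_image_of_mem _ (hS y hy))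
  · intro hs
    induction hs using AddSubmonoid.closure_induction with
    | mem s hs =>
      obtain ⟨x, hx, rfl⟩ := hs
      exact ⟨x, (le_kstar : L ≤ L∗) hx, rfl⟩
    | zero => exact ⟨[], nil_mem_kstar L, rfl⟩
    | add s t _ _ hs ht =>
      obtain ⟨x, hx, rfl⟩ := hs
      obtain ⟨y, hy, rfl⟩ := ht
      exact ⟨x ++ y, kstar_mul_kstar L ▸ append_mem_mul hx hy, parikh_append x y⟩

theorem perm_singleton_mul_kstar (u : List α) (L : Language α) :
    ({u} * L∗).perm =
      List.parikh ⁻¹' ((u.parikh + ·) '' AddSubmonoid.closure (List.parikh '' L)) := by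
  ext w
  simp only [mem_perm_iff, mem_mul, ← parikh_image_kstar, ← parikh_eq_parikh_iff]
  constructor
  · rintro ⟨_, ⟨_, rfl, x, hx, rfl⟩, hw⟩
    exact ⟨x.parikh, ⟨x, hx, rfl⟩, by rw [hw, parikh_append]⟩
  · rintro ⟨_, ⟨x, hx, rfl⟩, hw⟩
    exact ⟨u ++ x, ⟨u, rfl, x, hx, rfl⟩, by rw [← hw, parikh_append]⟩

theorem single_mem_closure_parikh_image {L : Language α} {w : List α} {b : α} {m : ℕ}
    (hw : w ∈ L) (hb : ∀ x ∈ w, x = b) (hdvd : w.length ∣ m) :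
    Pi.single b m ∈ AddSubmonoid.closure (List.parikh '' L) := by
  obtain ⟨k, rfl⟩ := hdvd
  have hrep : w = replicate w.length b := eq_replicate_iff.mpr ⟨rfl, hb⟩
  have : Pi.single b (w.length * k) = k • w.parikh := by
    rw [hrep, parikh_replicate, length_replicate, ← Pi.single_smul, smul_eq_mul, mul_comm]
  rw [this]
  exact nsmul_mem (AddSubmonoid.subset_closure (Set.mem_image_of_mem _ hw)) k

end Language

-- The state reached after `x` steps in a unary automaton with a tail of length `N` followed by
-- a cycle of length `m`.
def thresholdMod (N m x : ℕ) : ℕ := if x < N then x else N + (x - N) % m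

theorem thresholdMod_lt {N m : ℕ} (hm : 0 < m) (x : ℕ) : thresholdMod N m x < N + m := by
  unfold thresholdMod
  split_ifs
  · omega
  · have := Nat.mod_lt (x - N) hm
    omega

theorem thresholdMod_thresholdMod_add (N m x k : ℕ) :
    thresholdMod N m (thresholdMod N m x + k) = thresholdMod N m (x + k) := by
  by_cases hx : x < N
  · simp only [thresholdMod, hx, if_true]
  · have hk : x + k - N = (x - N) + k := by omega
    simp only [thresholdMod, hx, if_false, show ¬(N + (x - N) % m + k < N) by omega,
      show ¬(x + k < N) by omega, hk, show N + (x - N) % m + k - N = (x - N) % m + k by omega,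
      Nat.mod_add_mod]

theorem eq_or_modEq_of_thresholdMod_eq {N m x y : ℕ}
    (h : thresholdMod N m x = thresholdMod N m y) :
    x = y ∨ N ≤ x ∧ N ≤ y ∧ x ≡ y [MOD m] := by
  unfold thresholdMod at h
  split_ifs at h with hx hy hy
  · exact .inl h
  · omega
  · omega
  · refine .inr ⟨by omega, by omega, ?_⟩
    have hmod : x - N ≡ y - N [MOD m] := Nat.add_left_cancel h
    simpa [Nat.sub_add_cancel (not_lt.mp hx), Nat.sub_add_cancel (not_lt.mp hy)] using
      hmod.add_right N

theorem Language.isRegular_preimage_parikh {α : Type*} [Fintype α] [DecidableEq α]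
    {P : Set (α → ℕ)} {N m : ℕ} (hm : 0 < m)
    (hP : ∀ v v', (∀ a, thresholdMod N m (v a) = thresholdMod N m (v' a)) → v ∈ P → v' ∈ P) :
    Language.IsRegular (List.parikh ⁻¹' P : Set (List α)) := by
  set L : Language α := List.parikh ⁻¹' P
  let cls : List α → α → Fin (N + m) := fun x a =>
    ⟨thresholdMod N m (x.count a), thresholdMod_lt hm _⟩
  have hquot : ∀ x x', cls x = cls x' → ∀ y, x ++ y ∈ L → x' ++ y ∈ L := by
    intro x x' h y hy
    refine hP _ _ (fun a => ?_) hy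
    have hxa : thresholdMod N m (x.count a) = thresholdMod N m (x'.count a) :=
      congrArg (fun c => (c a : ℕ)) h
    simp only [List.parikh_apply, List.count_append]
    rw [← thresholdMod_thresholdMod_add, hxa, thresholdMod_thresholdMod_add]
  let quot : (α → Fin (N + m)) → Language α := fun c => {y | ∃ x, cls x = c ∧ x ++ y ∈ L}
  have hfactor : L.leftQuotient = quot ∘ cls := by
    funext x
    ext y
    exact ⟨fun hy => ⟨x, rfl, hy⟩, fun ⟨x', hx', hy⟩ => hquot x' x hx' y hy⟩
  apply Language.IsRegular.of_finite_range_leftQuotient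
  rw [hfactor, Set.range_comp]
  exact (Set.toFinite (Set.range cls)).image _

section PeriodicClosure

variable {α : Type*}

theorem exists_add_nsmul_of_mem_closure {G : Finset (α → ℕ)} {m : ℕ} (hm : 0 < m)
    {s : α → ℕ} (hs : s ∈ AddSubmonoid.closure (G : Set (α → ℕ))) :
    ∃ r ∈ AddSubmonoid.closure (G : Set (α → ℕ)), ∃ q : α → ℕ, s = r + m • q ∧
      (∀ a, r a ≤ m * ∑ g ∈ G, g a) ∧ ∀ b, q b ≠ 0 → ∃ g ∈ G, g b ≠ 0 := by
  obtain ⟨n, -, rfl⟩ := AddSubmonoid.mem_closure_finset.mp hs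
  refine ⟨∑ g ∈ G, (n g % m) • g,
    sum_mem fun g hg => nsmul_mem (AddSubmonoid.subset_closure hg) _,
    ∑ g ∈ G, (n g / m) • g, ?_, fun a => ?_, fun b hb => ?_⟩
  · rw [Finset.smul_sum, ← Finset.sum_add_distrib]
    refine Finset.sum_congr rfl fun g _ => ?_
    rw [smul_smul, ← add_nsmul, Nat.mod_add_div]
  · simp only [Finset.sum_apply, Pi.smul_apply, smul_eq_mul, Finset.mul_sum]
    exact Finset.sum_le_sum fun g _ => Nat.mul_le_mul_right _ (Nat.mod_lt _ hm).le
  · simp only [Finset.sum_apply, Pi.smul_apply, smul_eq_mul] at hb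
    obtain ⟨g, hg, hgb⟩ := Finset.exists_ne_zero_of_sum_ne_zero hb
    exact ⟨g, hg, right_ne_zero_of_mul hgb⟩

variable [Fintype α] [DecidableEq α]

theorem nsmul_mem_of_single_mem {S : AddSubmonoid (α → ℕ)} {m : ℕ} {q : α → ℕ}
    (hq : ∀ b, q b ≠ 0 → Pi.single b m ∈ S) : m • q ∈ S := by
  rw [← Finset.univ_sum_single q, Finset.smul_sum]
  refine sum_mem fun b _ => ?_
  by_cases hb : q b = 0
  · simp [hb]
  · rw [← Pi.single_smul, smul_eq_mul, mul_comm, ← smul_eq_mul, Pi.single_smul]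
    exact nsmul_mem (hq b hb) _

theorem mem_add_image_closure_of_thresholdMod_eq {G : Finset (α → ℕ)} {c : α → ℕ} {N m : ℕ}
    (hm : 0 < m)
    (hG : ∀ g ∈ G, ∀ b, g b ≠ 0 → Pi.single b m ∈ AddSubmonoid.closure (G : Set (α → ℕ)))
    (hN : ∀ a, c a + m * ∑ g ∈ G, g a < N) {v v' : α → ℕ}
    (hvv' : ∀ a, thresholdMod N m (v a) = thresholdMod N m (v' a))
    (hv : v ∈ (c + ·) '' AddSubmonoid.closure (G : Set (α → ℕ))) :
    v' ∈ (c + ·) '' AddSubmonoid.closure (G : Set (α → ℕ)) := by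
  obtain ⟨s, hs, rfl⟩ := hv
  obtain ⟨r, hr, q, rfl, hrle, hqG⟩ := exists_add_nsmul_of_mem_closure hm hs
  beta_reduce at hvv'
  have hcoord : ∀ b, ∃ k, v' b = c b + r b + m * k ∧ (k ≠ 0 → q b ≠ 0) := by
    intro b
    have hbase : c b + r b < N := (Nat.add_le_add_left (hrle b) _).trans_lt (hN b)
    have hvb : (c + (r + m • q)) b = c b + r b + m * q b := by simp [add_assoc]
    rcases eq_or_modEq_of_thresholdMod_eq (hvv' b) with h | ⟨hvN, hv'N, hmod⟩
    · exact ⟨q b, by rw [← h, hvb], id⟩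
    · have hq : q b ≠ 0 := by
        rintro hqb
        rw [hvb, hqb] at hvN
        omega
      rw [hvb] at hmod
      have hbase_mod : c b + r b ≡ v' b [MOD m] :=
        (Nat.add_mul_mod_self_left (c b + r b) m (q b)).symm.trans hmod
      obtain ⟨k, hk⟩ := (Nat.modEq_iff_dvd' (by omega)).mp hbase_mod
      exact ⟨k, by omega, fun _ => hq⟩
  choose q' hq' hq'q using hcoord
  refine ⟨r + m • q', add_mem hr (nsmul_mem_of_single_mem fun b hb => ?_), ?_⟩
  · obtain ⟨g, hg, hgb⟩ := hqG b (hq'q b hb)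
    exact hG g hg b hgb
  · ext b
    simp [hq' b, add_assoc]

end PeriodicClosure

theorem Language.exists_forall_length_le {α : Type*} {L : Language α} (hL : L.Finite) :
    ∃ C, ∀ x ∈ L, x.length ≤ C :=
  (hL.image length).bddAbove.imp fun _ hC x hx => hC ⟨x, hx, rfl⟩

namespace Language

variable {α : Type*} [DecidableEq α]

theorem not_isRegular_of_count_le {L : Language α} (hL : ∀ ⦃w w'⦄, w ~ w' → w ∈ L → w' ∈ L)
    (a : α) (K C : ℕ) (hbound : ∀ w ∈ L, w.count a ≤ K + C * w.countP (· != a))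
    (hunbounded : ∀ n, ∃ w ∈ L, n ≤ w.count a) : ¬ L.IsRegular := by
  rintro ⟨σ, _, M, rfl⟩
  obtain ⟨w, hw, hn⟩ := hunbounded (Fintype.card σ)
  set x := w.filter (· == a) ++ w.filter (· != a) with hx
  have hxM : x ∈ M.accepts := hL (filter_append_perm _ w).symm hw
  have hlen_a : (w.filter (· == a)).length = w.count a := count_eq_length_filter.symm
  obtain ⟨A, b, D, hxAbD, hlen, hb, hpump⟩ := M.pumping_lemma hxM (by simp [hx]; omega)
  have hba : ∀ c ∈ b, c = a := by
    intro c hc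
    have hAb : A ++ b = (w.filter (· == a)).take (A ++ b).length := by
      rw [← take_append_of_le_length (l₂ := w.filter (· != a)) (by simp; omega), ← hx, hxAbD,
        take_left' rfl]
    have hc' : c ∈ w.filter (· == a) := mem_of_mem_take (hAb ▸ mem_append_right A hc)
    simpa using of_mem_filter hc'
  have hb_count : b.count a = b.length := count_eq_length.mpr fun c hc => (hba c hc).symm
  have hb_countP : b.countP (· != a) = 0 := countP_eq_zero.mpr fun c hc => by simp [hba c hc]
  have hx_countP : x.countP (· != a) = A.countP (· != a) + D.countP (· != a) := by
    rw [hxAbD, countP_append, countP_append, hb_countP, add_zero]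
  set k := K + C * x.countP (· != a) + 1
  have hy : A ++ (replicate k b).flatten ++ D ∈ M.accepts :=
    hpump (append_mem_mul (append_mem_mul rfl
      (join_mem_kstar fun y hy => eq_of_mem_replicate hy)) rfl)
  have := hbound _ hy
  have hk : k ≤ k * b.length := Nat.le_mul_of_pos_right k (length_pos_iff.mpr hb)
  simp only [count_append, countP_append, count_flatten, countP_flatten, map_replicate,
    sum_replicate, smul_eq_mul, hb_count, hb_countP, mul_zero, add_zero, ← hx_countP] at this
  omega

theorem count_le_of_mem_perm_singleton_mul_kstar {L : Language α} {a : α} {C : ℕ}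
    (hC : ∀ x ∈ L, x.length ≤ C) (hLa : ∀ x ∈ L, a ∈ x → ∃ b ∈ x, b ≠ a) {u w : List α}
    (hw : w ∈ ({u} * L∗).perm) : w.count a ≤ u.count a + C * w.countP (· != a) := by
  have hword : ∀ x ∈ L, x.count a ≤ C * x.countP (· != a) := by
    intro x hx
    by_cases hax : a ∈ x
    · obtain ⟨b, hb, hba⟩ := hLa x hx hax
      have hpos : 0 < x.countP (· != a) := countP_pos_iff.mpr ⟨b, hb, by simpa using hba⟩
      calc x.count a ≤ C := count_le_length.trans (hC x hx)
        _ ≤ C * x.countP (· != a) := Nat.le_mul_of_pos_right C hpos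
    · simp [count_eq_zero_of_not_mem hax]
  obtain ⟨_, ⟨_, rfl, x, hx, rfl⟩, hw⟩ := mem_perm_iff.mp hw
  obtain ⟨S, rfl, hS⟩ := mem_kstar.mp hx
  have hflat : S.flatten.count a ≤ C * S.flatten.countP (· != a) := by
    rw [count_flatten, countP_flatten, ← sum_map_mul_left]
    exact sum_le_sum fun y hy => hword y (hS y hy)
  rw [hw.count_eq, hw.countP_eq, count_append, countP_append, mul_add]
  omega

theorem not_isRegular_perm_singleton_mul_kstar {L : Language α} (hL : L.Finite) (u : List α)
    {a : α} {w₀ : List α} (hw₀ : w₀ ∈ L) (haw₀ : a ∈ w₀)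
    (hLa : ∀ w ∈ L, w ≠ [] → ∃ x ∈ w, x ≠ a) : ¬ ({u} * L∗).perm.IsRegular := by
  obtain ⟨C, hC⟩ := exists_forall_length_le hL
  refine not_isRegular_of_count_le (fun _ _ => mem_perm_of_perm) a (u.count a) C
    (fun w => count_le_of_mem_perm_singleton_mul_kstar hC fun x hx hax =>
      hLa x hx (ne_nil_of_mem hax)) fun n => ⟨u ++ (replicate n w₀).flatten, ?_, ?_⟩
  · exact le_perm _ <| append_mem_mul rfl <|
      join_mem_kstar fun y hy => eq_of_mem_replicate hy ▸ hw₀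
  · have : 0 < w₀.count a := count_pos_iff.mpr haw₀
    simp only [count_append, count_flatten, map_replicate, sum_replicate, smul_eq_mul]
    nlinarith

theorem isRegular_perm_singleton_mul_kstar [Fintype α] (u : List α) {L : Language α}
    (hL : L.Finite) (h : ∀ a : α, (∃ w ∈ L, a ∈ w) → ∃ w ∈ L, w ≠ [] ∧ ∀ x ∈ w, x = a) :
    ({u} * L∗).perm.IsRegular := by
  obtain ⟨C, hC⟩ := exists_forall_length_le hL
  set G := (hL.image parikh).toFinset
  have hG : (G : Set (α → ℕ)) = parikh '' L := Set.Finite.coe_toFinset _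
  have hm := Nat.factorial_pos C
  rw [perm_singleton_mul_kstar, ← hG]
  refine isRegular_preimage_parikh hm (N := ∑ a, (u.parikh a + C.factorial * ∑ g ∈ G, g a) + 1)
    fun v v' hvv' => mem_add_image_closure_of_thresholdMod_eq hm ?_ (fun a => ?_) hvv'
  · rintro g hg b hgb
    obtain ⟨x, hx, rfl⟩ : g ∈ parikh '' L := hG ▸ hg
    obtain ⟨w, hw, hne, hwb⟩ := h b ⟨x, hx, count_pos_iff.mp (Nat.pos_of_ne_zero hgb)⟩
    rw [hG]
    exact single_mem_closure_parikh_image hw hwb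
      (Nat.dvd_factorial (length_pos_iff.mpr hne) (hC w hw))
  · exact Nat.lt_succ_of_le <| Finset.single_le_sum
      (f := fun a => u.parikh a + C.factorial * ∑ g ∈ G, g a) (by simp) (Finset.mem_univ a)

end Language

open Language in
theorem perm_shuffle_perm_shuffleStar_regular_iff {α : Type*} [Fintype α]
    [DecidableEq α] (u : List α) (L : Language α) (hL : L.Finite) :
    ((({u} : Language α).perm).shuffle L.perm.shuffleStar).IsRegular ↔
      ∀ a : α, (∃ w ∈ L, a ∈ w) → ∃ w ∈ L, w ≠ [] ∧ ∀ x ∈ w, x = a := by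
  rw [shuffleStar_perm, perm_shuffle_perm]
  refine ⟨fun hreg a ⟨w₀, hw₀, haw₀⟩ => ?_, isRegular_perm_singleton_mul_kstar u hL⟩
  by_contra hno
  push Not at hno
  exact not_isRegular_perm_singleton_mul_kstar hL u hw₀ haw₀ hno hreg
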